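/- Let p, p' ∈ ℝⁿ with ‖p - p'‖₁ ≤ σ, ε > 0, γ ∈ ℝ. Define the randomized mechanism S(p) that independently includes each index i in the output set with probability F((p_i - γ)·ε/σ), where F is the CDF of the standard Laplace distribution (F(x) = (1/2)e^x for x < 0, F(x) = 1 - (1/2)e^{-x} for x ≥ 0). Then for every subset X ⊆ [n], Pr[S(p) = X] ≤ e^ε · Pr[S(p') = X]. -/

import Mathlib

/-!
Each index is included independently, so the output probability is a product of per-index
factors `F(aᵢ)` or `1 - F(aᵢ) = F(-aᵢ)`. The Laplace CDF is `1`-log-Lipschitz,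
`F x ≤ e^{|x - y|} F y` (for `y ≤ x` because `F(x) e^{-x}` is antitone), so changing `p` to `p'` multiplies the `i`-th factor by at most
`e^{|pᵢ - p'ᵢ| ε / σ}`, and the sensitivity bound makes the product of these at most `e^ε`.
-/

open Finset

/-- The CDF of the standard Laplace distribution. -/
noncomputable def laplaceCDF (x : ℝ) : ℝ :=
  if x < 0 then (1 / 2) * Real.exp x else 1 - (1 / 2) * Real.exp (-x)

/-- Probability that the sparsification mechanism run on `p` outputs exactly the set `X`:
each index `i` is independently included with probability `F((p i - γ)·ε/σ)`. -/
noncomputable def sparsificationProb {n : ℕ} (p : Fin n → ℝ) (σ ε γ : ℝ)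
    (X : Finset (Fin n)) : ℝ :=
  (∏ i ∈ X, laplaceCDF ((p i - γ) * ε / σ)) *
    ∏ i ∈ Xᶜ, (1 - laplaceCDF ((p i - γ) * ε / σ))

lemma laplaceCDF_nonneg (x : ℝ) : 0 ≤ laplaceCDF x := by
  unfold laplaceCDF
  split_ifs with h
  · positivity
  · have : Real.exp (-x) ≤ 1 := Real.exp_le_one_iff.mpr (by linarith)
    linarith

lemma laplaceCDF_neg (x : ℝ) : laplaceCDF (-x) = 1 - laplaceCDF x := by
  unfold laplaceCDF
  rcases lt_trichotomy x 0 with h | rfl | h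
  · rw [if_neg (by linarith), if_pos h, neg_neg]
  · norm_num
  · rw [if_pos (by linarith), if_neg (by linarith)]
    ring

lemma one_sub_laplaceCDF_nonneg (x : ℝ) : 0 ≤ 1 - laplaceCDF x :=
  laplaceCDF_neg x ▸ laplaceCDF_nonneg (-x)

lemma laplaceCDF_mono : Monotone laplaceCDF := by
  intro x y hxy
  unfold laplaceCDF
  split_ifs with hx hy hy
  · linarith [Real.exp_le_exp.mpr hxy]
  · have h1 : Real.exp x ≤ 1 := Real.exp_le_one_iff.mpr hx.le
    have h2 : Real.exp (-y) ≤ 1 := Real.exp_le_one_iff.mpr (by linarith)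
    linarith
  · linarith
  · linarith [Real.exp_le_exp.mpr (neg_le_neg hxy)]

/-- On `[0, ∞)` this is `e^{-x} - e^{-2x}/2` completed to a square. -/
lemma laplaceCDF_mul_exp_neg (x : ℝ) :
    laplaceCDF x * Real.exp (-x) = 1 / 2 - max (1 - Real.exp (-x)) 0 ^ 2 / 2 := by
  have hexp : Real.exp x * Real.exp (-x) = 1 := by rw [← Real.exp_add]; simp
  unfold laplaceCDF
  split_ifs with h
  · have : 1 < Real.exp (-x) := Real.one_lt_exp_iff.mpr (by linarith)
    rw [max_eq_right (by linarith)]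
    linear_combination (1 / 2 : ℝ) * hexp
  · have : Real.exp (-x) ≤ 1 := Real.exp_le_one_iff.mpr (by linarith)
    rw [max_eq_left (by linarith)]
    ring

lemma antitone_laplaceCDF_mul_exp_neg : Antitone fun x ↦ laplaceCDF x * Real.exp (-x) := by
  intro x y hxy
  simp only [laplaceCDF_mul_exp_neg]
  have : Real.exp (-y) ≤ Real.exp (-x) := Real.exp_le_exp.mpr (neg_le_neg hxy)
  gcongr

lemma laplaceCDF_le_exp_sub_mul {x y : ℝ} (h : y ≤ x) :
    laplaceCDF x ≤ Real.exp (x - y) * laplaceCDF y := by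
  calc laplaceCDF x = laplaceCDF x * Real.exp (-x) * Real.exp x := by
        rw [mul_assoc, ← Real.exp_add, neg_add_cancel, Real.exp_zero, mul_one]
    _ ≤ laplaceCDF y * Real.exp (-y) * Real.exp x :=
        mul_le_mul_of_nonneg_right (antitone_laplaceCDF_mul_exp_neg h) (Real.exp_pos x).le
    _ = Real.exp (x - y) * laplaceCDF y := by rw [sub_eq_add_neg, Real.exp_add]; ring

lemma laplaceCDF_le_exp_abs_mul (x y : ℝ) :
    laplaceCDF x ≤ Real.exp |x - y| * laplaceCDF y := by
  rcases le_total y x with h | h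
  · rw [abs_of_nonneg (sub_nonneg.mpr h)]
    exact laplaceCDF_le_exp_sub_mul h
  · calc laplaceCDF x ≤ laplaceCDF y := laplaceCDF_mono h
      _ ≤ Real.exp |x - y| * laplaceCDF y :=
        le_mul_of_one_le_left (laplaceCDF_nonneg y) (Real.one_le_exp (abs_nonneg _))

lemma one_sub_laplaceCDF_le_exp_abs_mul (x y : ℝ) :
    1 - laplaceCDF x ≤ Real.exp |x - y| * (1 - laplaceCDF y) := by
  simpa only [← laplaceCDF_neg, neg_sub_neg, abs_sub_comm] using laplaceCDF_le_exp_abs_mul (-x) (-y)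

lemma prod_mul_prod_compl_le_exp_sum_mul {ι : Type*} [Fintype ι] [DecidableEq ι]
    (s : Finset ι) {f g f' g' c : ι → ℝ} (hf : ∀ i, 0 ≤ f i) (hg : ∀ i, 0 ≤ g i)
    (hff' : ∀ i, f i ≤ Real.exp (c i) * f' i) (hgg' : ∀ i, g i ≤ Real.exp (c i) * g' i) :
    (∏ i ∈ s, f i) * ∏ i ∈ sᶜ, g i ≤
      Real.exp (∑ i, c i) * ((∏ i ∈ s, f' i) * ∏ i ∈ sᶜ, g' i) :=
  calc (∏ i ∈ s, f i) * ∏ i ∈ sᶜ, g i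
      ≤ (∏ i ∈ s, Real.exp (c i) * f' i) * ∏ i ∈ sᶜ, Real.exp (c i) * g' i :=
        mul_le_mul (prod_le_prod (fun i _ ↦ hf i) fun i _ ↦ hff' i)
          (prod_le_prod (fun i _ ↦ hg i) fun i _ ↦ hgg' i) (prod_nonneg fun i _ ↦ hg i)
          (prod_nonneg fun i _ ↦ (hf i).trans (hff' i))
    _ = Real.exp (∑ i, c i) * ((∏ i ∈ s, f' i) * ∏ i ∈ sᶜ, g' i) := by
        rw [prod_mul_distrib, prod_mul_distrib, Real.exp_sum, ← prod_mul_prod_compl s]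
        ring

lemma sparsificationProb_nonneg {n : ℕ} (p : Fin n → ℝ) (σ ε γ : ℝ) (X : Finset (Fin n)) :
    0 ≤ sparsificationProb p σ ε γ X :=
  mul_nonneg (prod_nonneg fun _ _ ↦ laplaceCDF_nonneg _)
    (prod_nonneg fun _ _ ↦ one_sub_laplaceCDF_nonneg _)

theorem sparsification_is_DP {n : ℕ} (p p' : Fin n → ℝ) (σ ε γ : ℝ)
    (hσ : 0 < σ) (hε : 0 < ε) (hsens : (∑ i, |p i - p' i|) ≤ σ) :
    ∀ X : Finset (Fin n),
      sparsificationProb p σ ε γ X ≤ Real.exp ε * sparsificationProb p' σ ε γ X := by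
  intro X
  set a : Fin n → ℝ := fun i ↦ (p i - γ) * ε / σ
  set b : Fin n → ℝ := fun i ↦ (p' i - γ) * ε / σ
  have hscale : 0 < ε / σ := div_pos hε hσ
  have hab : ∀ i, |a i - b i| = |p i - p' i| * (ε / σ) := fun i ↦ by
    rw [show a i - b i = (p i - p' i) * (ε / σ) by simp only [a, b]; ring, abs_mul,
      abs_of_pos hscale]
  have hsum : ∑ i, |a i - b i| ≤ ε :=
    calc ∑ i, |a i - b i| = (∑ i, |p i - p' i|) * (ε / σ) := by simp only [hab, sum_mul]
      _ ≤ σ * (ε / σ) := mul_le_mul_of_nonneg_right hsens hscale.le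
      _ = ε := mul_div_cancel₀ ε hσ.ne'
  calc sparsificationProb p σ ε γ X
      ≤ Real.exp (∑ i, |a i - b i|) * sparsificationProb p' σ ε γ X :=
        prod_mul_prod_compl_le_exp_sum_mul X (fun _ ↦ laplaceCDF_nonneg _)
          (fun _ ↦ one_sub_laplaceCDF_nonneg _) (fun i ↦ laplaceCDF_le_exp_abs_mul (a i) (b i))
          (fun i ↦ one_sub_laplaceCDF_le_exp_abs_mul (a i) (b i))
    _ ≤ Real.exp ε * sparsificationProb p' σ ε γ X :=
        mul_le_mul_of_nonneg_right (Real.exp_le_exp.mpr hsum) (sparsificationProb_nonneg _ _ _ _ _)
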